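/- Let a, b ≥ 1 and k ≥ 1 be natural numbers, let û : Fin a → ℝ (incoming weights) and v̂ : Fin b → ℝ (outgoing weights) be strictly positive, and set β = (k·(∑_i û_i)/(∑_j v̂_j))^{1/(k+1)}. Define u*_i = û_i·β^{−k} and v*_j = v̂_j·β. Then ∑_j v*_j = k·∑_i u*_i, and for every pair of nonnegative vectors u : Fin a → ℝ, v : Fin b → ℝ satisfying ∑_j v_j = k·∑_i u_i one has Δ((u*,v*)‖(û,v̂)) ≤ Δ((u,v)‖(û,v̂)), where Δ is taken over the disjoint union of the two index sets. (That is, the relative entropy projection of (û,v̂) onto the k-flow constraint 'outflow equals k times inflow' multiplies all outgoing weights by β and all incoming weights by β^{−k}.) -/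

import Mathlib

/-!
Multiplying the reference weights by positive constants only shifts the relative entropy by a
term linear in the total masses: `Δ(x‖y) = Δ(x‖c y) + log c · ∑ x + (1 - c) ∑ y`. Rescaling the
incoming weights by `β^{-k}` and the outgoing ones by `β` therefore turns `Δ((u,v)‖(û,v̂))` into
`Δ((u,v)‖(u*,v*)) + log β · (∑ v - k ∑ u) + const`, and on the `k`-flow constraint the middle
term vanishes. Since `Δ ≥ 0` and `Δ(x‖x) = 0`, the minimum is attained at `(u*,v*)` as soon as
`(u*,v*)` itself satisfies the constraint, which is exactly the choice `β^{k+1} = k ∑ û / ∑ v̂`.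
-/

open Real Finset

section RelEnt

variable {ι κ : Type*} [Fintype ι] [Fintype κ]

noncomputable def relEnt (x y : ι → ℝ) : ℝ := ∑ e, (x e * log (x e / y e) + y e - x e)

theorem relEnt_self (x : ι → ℝ) : relEnt x x = 0 := by
  simp [relEnt]

theorem relEnt_nonneg {x y : ι → ℝ} (hx : ∀ e, 0 ≤ x e) (hy : ∀ e, 0 < y e) :
    0 ≤ relEnt x y := by
  refine sum_nonneg fun e _ => ?_
  have hterm : x e * log (x e / y e) + y e - x e = y e * InformationTheory.klFun (x e / y e) := by
    rw [InformationTheory.klFun]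
    field_simp [(hy e).ne']
  rw [hterm]
  exact mul_nonneg (hy e).le (InformationTheory.klFun_nonneg (div_nonneg (hx e) (hy e).le))

theorem mul_log_div_add_sub_eq_rescale {x y c : ℝ} (hy : y ≠ 0) (hc : c ≠ 0) :
    x * log (x / y) + y - x = (x * log (x / (y * c)) + y * c - x) + log c * x + (1 - c) * y := by
  rcases eq_or_ne x 0 with rfl | hx
  · ring
  · have hsplit : x / y = c * (x / (y * c)) := by field_simp
    rw [hsplit, log_mul hc (by positivity)]
    ring

theorem relEnt_eq_relEnt_mul_add {x y : ι → ℝ} {c : ℝ} (hy : ∀ e, y e ≠ 0) (hc : c ≠ 0) :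
    relEnt x y = relEnt x (fun e => y e * c) + log c * ∑ e, x e + (1 - c) * ∑ e, y e := by
  simp only [relEnt, mul_sum, ← sum_add_distrib]
  exact sum_congr rfl fun e _ => mul_log_div_add_sub_eq_rescale (hy e) hc

theorem relEnt_add_relEnt_eq_of_flow {k β : ℝ} (hβ : 0 < β)
    {u uhat : ι → ℝ} {v vhat : κ → ℝ} (huhat : ∀ i, uhat i ≠ 0) (hvhat : ∀ j, vhat j ≠ 0)
    (hflow : ∑ j, v j = k * ∑ i, u i) :
    relEnt u uhat + relEnt v vhat =
      relEnt u (fun i => uhat i * β ^ (-k)) + relEnt v (fun j => vhat j * β) +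
        ((1 - β ^ (-k)) * ∑ i, uhat i + (1 - β) * ∑ j, vhat j) := by
  rw [relEnt_eq_relEnt_mul_add (x := u) huhat (rpow_pos_of_pos hβ (-k)).ne',
    relEnt_eq_relEnt_mul_add (x := v) hvhat hβ.ne', log_rpow hβ, hflow]
  ring

end RelEnt

theorem kflow_balance_of_eq_rpow {U V k β : ℝ} (hU : 0 < U) (hV : 0 < V) (hk : 0 < k)
    (hβ : β = (k * U / V) ^ (1 / (k + 1))) :
    V * β = k * (U * β ^ (-k)) := by
  have hβ_pos : 0 < β := hβ ▸ by positivity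
  have hβ_pow : β * β ^ k = k * U / V := by
    rw [← rpow_one_add' hβ_pos.le (by positivity), add_comm, hβ,
      ← rpow_mul (by positivity), one_div_mul_cancel (by positivity), rpow_one]
  rw [rpow_neg hβ_pos.le]
  field_simp
  rw [mul_assoc, hβ_pow]
  field_simp

/-- The relative entropy projection of `(û, v̂)` onto the `k`-flow constraint
"outflow equals `k` times inflow" multiplies all outgoing weights by
`β = (k·(∑û)/(∑v̂))^{1/(k+1)}` and all incoming weights by `β^{-k}`. -/
theorem relEnt_proj_kflow
    (a b k : ℕ) (ha : 1 ≤ a) (hb : 1 ≤ b) (hk : 1 ≤ k)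
    (uhat : Fin a → ℝ) (vhat : Fin b → ℝ)
    (huhat : ∀ i, 0 < uhat i) (hvhat : ∀ j, 0 < vhat j)
    (β : ℝ) (hβ : β = ((k : ℝ) * (∑ i, uhat i) / (∑ j, vhat j)) ^ ((1 : ℝ) / (k + 1)))
    (ustar : Fin a → ℝ) (vstar : Fin b → ℝ)
    (hustar : ∀ i, ustar i = uhat i * β ^ (-(k : ℝ)))
    (hvstar : ∀ j, vstar j = vhat j * β) :
    (∑ j, vstar j = k * ∑ i, ustar i) ∧
      ∀ (u : Fin a → ℝ) (v : Fin b → ℝ),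
        (∀ i, 0 ≤ u i) → (∀ j, 0 ≤ v j) →
        (∑ j, v j = k * ∑ i, u i) →
        (∑ i, (ustar i * Real.log (ustar i / uhat i) + uhat i - ustar i)) +
            (∑ j, (vstar j * Real.log (vstar j / vhat j) + vhat j - vstar j)) ≤
          (∑ i, (u i * Real.log (u i / uhat i) + uhat i - u i)) +
            (∑ j, (v j * Real.log (v j / vhat j) + vhat j - v j)) := by
  have hU : 0 < ∑ i, uhat i := sum_pos (fun i _ => huhat i) (univ_nonempty_iff.mpr ⟨⟨0, ha⟩⟩)
  have hV : 0 < ∑ j, vhat j := sum_pos (fun j _ => hvhat j) (univ_nonempty_iff.mpr ⟨⟨0, hb⟩⟩)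
  have hk_pos : (0 : ℝ) < k := by exact_mod_cast hk
  have hβ_pos : 0 < β := hβ ▸ by positivity
  have hustar_eq : ustar = fun i => uhat i * β ^ (-(k : ℝ)) := funext hustar
  have hvstar_eq : vstar = fun j => vhat j * β := funext hvstar
  have hbalance : ∑ j, vstar j = k * ∑ i, ustar i := by
    simp only [hustar, hvstar, ← sum_mul]
    exact kflow_balance_of_eq_rpow hU hV hk_pos hβ
  refine ⟨hbalance, fun u v hu hv hflow => ?_⟩
  have huhat_ne : ∀ i, uhat i ≠ 0 := fun i => (huhat i).ne'
  have hvhat_ne : ∀ j, vhat j ≠ 0 := fun j => (hvhat j).ne'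
  change relEnt ustar uhat + relEnt vstar vhat ≤ relEnt u uhat + relEnt v vhat
  rw [relEnt_add_relEnt_eq_of_flow hβ_pos huhat_ne hvhat_ne hflow,
    relEnt_add_relEnt_eq_of_flow hβ_pos huhat_ne hvhat_ne hbalance,
    ← hustar_eq, ← hvstar_eq, relEnt_self, relEnt_self]
  have hustar_pos : ∀ i, 0 < ustar i := fun i => hustar i ▸ mul_pos (huhat i) (by positivity)
  have hvstar_pos : ∀ j, 0 < vstar j := fun j => hvstar j ▸ mul_pos (hvhat j) hβ_pos
  linarith [relEnt_nonneg hu hustar_pos, relEnt_nonneg hv hvstar_pos]
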